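/- The size (weight) of a generic type G equals the maximum, over all type contexts 𝔾 with G = 𝔾⟨⋆⟩, of the branch size of 𝔾. In particular this maximum is attained. -/

import Mathlib

/-! # Tree intersection types -/

mutual
/-- Linear types: `A ::= ⋆ | T → A`. -/
inductive LinTy : Type where
  | star : LinTy
  | arr : TreeTy → LinTy → LinTy
/-- Generic types: linear types or tree types. -/
inductive GenTy : Type where
  | lin : LinTy → GenTy
  | tree : TreeTy → GenTy
/-- Tree types: finite sequences of generic types. -/
inductive TreeTy : Type where
  | node : List GenTy → TreeTy
end

mutual
/-- Leaves of a generic type. -/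
def GenTy.leaves : GenTy → List LinTy
  | .lin A => [A]
  | .tree T => TreeTy.leaves T
  termination_by g => sizeOf g
/-- Leaves extraction on tree types. -/
def TreeTy.leaves : TreeTy → List LinTy
  | .node gs => gs.attach.flatMap (fun g => GenTy.leaves g.1)
  termination_by T => sizeOf T
  decreasing_by simp_wf; have := List.sizeOf_lt_of_mem g.2; omega
end

/-- Concatenation `⊎` of tree types (sequences). -/
def TreeTy.cat : TreeTy → TreeTy → TreeTy
  | .node a, .node b => .node (a ++ b)

mutual
/-- Weight (size) of a linear type, with parameter `X`. -/
def LinTy.weight (X : ℕ) : LinTy → ℕ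
  | .star => 0
  | .arr T A => max (TreeTy.weight X T) (LinTy.weight X A + 1)
  termination_by A => sizeOf A
def GenTy.weight (X : ℕ) : GenTy → ℕ
  | .lin A => LinTy.weight X A
  | .tree T => TreeTy.weight X T
  termination_by g => sizeOf g
def TreeTy.weight (X : ℕ) : TreeTy → ℕ
  | .node gs => X + (gs.attach.map (fun g => GenTy.weight X g.1)).foldr max 0
  termination_by T => sizeOf T
  decreasing_by simp_wf; have := List.sizeOf_lt_of_mem g.2; omega
end

mutual
/-- Hereditary absence of empty sequences (every leaf context ends in `⋆`). -/
inductive LinTy.Good : LinTy → Prop where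
  | star : LinTy.Good .star
  | arr {T A} : TreeTy.Good T → LinTy.Good A → LinTy.Good (.arr T A)
inductive GenTy.Good : GenTy → Prop where
  | lin {A} : LinTy.Good A → GenTy.Good (.lin A)
  | tree {T} : TreeTy.Good T → GenTy.Good (.tree T)
inductive TreeTy.Good : TreeTy → Prop where
  | node {gs : List GenTy} : gs ≠ [] → (∀ g ∈ gs, GenTy.Good g) → TreeTy.Good (.node gs)
end

/-! ## Leaf contexts -/

/-- One-hole contexts into tree types whose hole sits at a leaf position. -/
inductive LeafCtx : Type where
  | here (l r : List GenTy) : LeafCtx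
  | deeper (l : List GenTy) (L : LeafCtx) (r : List GenTy) : LeafCtx

/-- Plugging a linear type into a leaf context. -/
def LeafCtx.plug : LeafCtx → LinTy → TreeTy
  | .here l r, A => .node (l ++ .lin A :: r)
  | .deeper l L r, A => .node (l ++ .tree (L.plug A) :: r)

/-- Number of leaves strictly to the left of the hole. -/
def LeafCtx.holeIdx : LeafCtx → ℕ
  | .here l _ => (TreeTy.node l).leaves.length
  | .deeper l L _ => (TreeTy.node l).leaves.length + L.holeIdx

/-! ## Type contexts -/

mutual
/-- Linear type contexts: `𝕃c ::= ⟨·⟩ | T → 𝕃c | 𝕋 → A`. -/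
inductive LinCtx : Type where
  | hole : LinCtx
  | arrR : TreeTy → LinCtx → LinCtx
  | arrL : TreeCtx → LinTy → LinCtx
/-- Tree type contexts. -/
inductive TreeCtx : Type where
  | node : List GenTy → GenCtx → List GenTy → TreeCtx
/-- Generic type contexts. -/
inductive GenCtx : Type where
  | lin : LinCtx → GenCtx
  | tree : TreeCtx → GenCtx
end

mutual
def LinCtx.plug : LinCtx → LinTy → LinTy
  | .hole, B => B
  | .arrR T C, B => .arr T (C.plug B)
  | .arrL C A, B => .arr (C.plug B) A
def TreeCtx.plug : TreeCtx → LinTy → TreeTy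
  | .node l C r, B => .node (l ++ C.plug B :: r)
def GenCtx.plug : GenCtx → LinTy → GenTy
  | .lin C, B => .lin (C.plug B)
  | .tree C, B => .tree (C.plug B)
end

mutual
/-- Branch size of a linear type context. -/
def LinCtx.bsize (X : ℕ) : LinCtx → ℕ
  | .hole => 0
  | .arrR _ C => 1 + C.bsize X
  | .arrL C _ => C.bsize X
def TreeCtx.bsize (X : ℕ) : TreeCtx → ℕ
  | .node _ C _ => X + C.bsize X
def GenCtx.bsize (X : ℕ) : GenCtx → ℕ
  | .lin C => C.bsize X
  | .tree C => C.bsize X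
end

/-! # λ-terms (de Bruijn) and Closed Call-by-Name -/

inductive Term : Type where
  | var : ℕ → Term
  | lam : Term → Term
  | app : Term → Term → Term

/-- Shifting of free indices `≥ c` by `d`. -/
def Term.lift (d : ℕ) : ℕ → Term → Term
  | c, .var n => if n < c then .var n else .var (n + d)
  | c, .lam t => .lam (Term.lift d (c+1) t)
  | c, .app t u => .app (Term.lift d c t) (Term.lift d c u)

/-- Capture-avoiding substitution of `u` for index `k`. -/
def Term.subst (u : Term) : ℕ → Term → Term
  | k, .var n => if n = k then Term.lift k 0 u else if k < n then .var (n-1) else .var n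
  | k, .lam t => .lam (Term.subst u (k+1) t)
  | k, .app t s => .app (Term.subst u k t) (Term.subst u k s)

/-- `t{x₀ := u}`. -/
def Term.subst0 (t u : Term) : Term := Term.subst u 0 t

def Term.ClosedUnder : Term → ℕ → Prop
  | .var n, k => n < k
  | .lam t, k => t.ClosedUnder (k+1)
  | .app t u, k => t.ClosedUnder k ∧ u.ClosedUnder k

/-- Closed terms: no free variables. -/
def Term.Closed (t : Term) : Prop := t.ClosedUnder 0

/-- Occurrence of a free variable. -/
def Term.FreeIn : Term → ℕ → Prop
  | .var n, x => n = x
  | .lam t, x => t.FreeIn (x+1)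
  | .app t u, x => t.FreeIn x ∨ u.FreeIn x

/-- Weak head reduction `(λy.t)u r₁…r_h →wh t{y:=u} r₁…r_h`. -/
inductive Whr : Term → Term → Prop where
  | beta (t u : Term) : Whr (.app (.lam t) u) (t.subst0 u)
  | appL {t t' : Term} (u : Term) : Whr t t' → Whr (.app t u) (.app t' u)

/-- `n`-step weak head reduction. -/
inductive WhN : ℕ → Term → Term → Prop where
  | refl (t : Term) : WhN 0 t t
  | step {n t u v} : Whr t u → WhN n u v → WhN (n+1) t v

/-! # Type environments and the tree type system -/

/-- Type environments: maps from (de Bruijn) variables to tree types. -/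
def Env : Type := ℕ → TreeTy

def Env.empty : Env := fun _ => .node []

/-- Pointwise concatenation `Γ ⊎ Δ`. -/
def Env.union (Γ Δ : Env) : Env := fun x => (Γ x).cat (Δ x)

/-- Environment of the variable axiom: `x : [A]`. -/
def Env.single (x : ℕ) (A : LinTy) : Env :=
  fun y => if y = x then .node [.lin A] else .node []

/-- Environment extension `Γ, x₀:T` (de Bruijn cons). -/
def Env.cons (T : TreeTy) (Γ : Env) : Env
  | 0 => T
  | n+1 => Γ n

/-- Wrap a (non-empty) tree type in one extra sequence layer. -/
def TreeTy.wrap : TreeTy → TreeTy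
  | .node [] => .node []
  | T => .node [.tree T]

/-- `[Γ]`: wrap each (non-empty) type of the environment in one extra layer. -/
def Env.wrap (Γ : Env) : Env := fun x => (Γ x).wrap

/-- Finite union of environments. -/
def Env.unionF {n : ℕ} (Γs : Fin n → Env) : Env :=
  (List.ofFn Γs).foldr Env.union Env.empty

/-- Tree type derivations. -/
inductive Deriv : Env → Term → GenTy → Type where
  | var (x : ℕ) (A : LinTy) : Deriv (Env.single x A) (.var x) (.lin A)
  | lam {Γ : Env} {T : TreeTy} {t : Term} {A : LinTy} :
      Deriv (Env.cons T Γ) t (.lin A) → Deriv Γ (.lam t) (.lin (.arr T A))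
  | lamStar (t : Term) : Deriv Env.empty (.lam t) (.lin .star)
  | app {Γ Δ : Env} {t u : Term} {T : TreeTy} {A : LinTy} :
      Deriv Γ t (.lin (.arr T A)) → Deriv Δ u (.tree T) →
      Deriv (Env.union Γ Δ) (.app t u) (.lin A)
  | many {t : Term} (n : ℕ) (Γs : Fin n → Env) (Gs : Fin n → GenTy)
      (prems : ∀ i, Deriv (Γs i) t (Gs i)) :
      Deriv (Env.wrap (Env.unionF Γs)) t (.tree (.node (List.ofFn Gs)))
  | none (t : Term) : Deriv Env.empty t (.tree (.node []))

/-- Size of a derivation: number of rules that are not T-many/T-none. -/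
def Deriv.size : ∀ {Γ t G}, Deriv Γ t G → ℕ
  | _, _, _, .var _ _ => 1
  | _, _, _, .lam π => π.size + 1
  | _, _, _, .lamStar _ => 1
  | _, _, _, .app π ρ => π.size + ρ.size + 1
  | _, _, _, .many n _ _ prems => ∑ i : Fin n, (prems i).size
  | _, _, _, .none _ => 0

/-- Weight of a weighted derivation, with parameter `X`. -/
def Deriv.weight (X : ℕ) : ∀ {Γ t G}, Deriv Γ t G → ℕ
  | _, _, _, .var _ A => A.weight X
  | _, _, _, .lam (T := T) (A := A) π => max (π.weight X) (LinTy.weight X (.arr T A))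
  | _, _, _, .lamStar _ => 0
  | _, _, _, .app π ρ => max (π.weight X) (ρ.weight X)
  | _, _, _, .many n _ _ prems => X + (Finset.univ.sup fun i => (prems i).weight X)
  | _, _, _, .none _ => 0

/-- `SubD π n π'`: the judgment of `π'` occurs in `π`, crossing `n` T-many rules
descending from it to the root. -/
inductive SubD : ∀ {Γ t G}, Deriv Γ t G → ℕ → ∀ {Γ' u G'}, Deriv Γ' u G' → Prop where
  | refl {Γ t G} (π : Deriv Γ t G) : SubD π 0 π
  | lam {Γ T t A} {π : Deriv (Env.cons T Γ) t (.lin A)} {n} {Γ' u G'} {π' : Deriv Γ' u G'} :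
      SubD π n π' → SubD (Deriv.lam π) n π'
  | appL {Γ Δ t u T A} {π : Deriv Γ t (.lin (.arr T A))} {ρ : Deriv Δ u (.tree T)}
      {n} {Γ' v G'} {π' : Deriv Γ' v G'} :
      SubD π n π' → SubD (Deriv.app π ρ) n π'
  | appR {Γ Δ t u T A} {π : Deriv Γ t (.lin (.arr T A))} {ρ : Deriv Δ u (.tree T)}
      {n} {Γ' v G'} {π' : Deriv Γ' v G'} :
      SubD ρ n π' → SubD (Deriv.app π ρ) n π'
  | many {t k} {Γs : Fin k → Env} {Gs : Fin k → GenTy} {prems : ∀ i, Deriv (Γs i) t (Gs i)}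
      (i : Fin k) {n} {Γ' u G'} {π' : Deriv Γ' u G'} :
      SubD (prems i) n π' → SubD (Deriv.many k Γs Gs prems) (n+1) π'

/-!
Each constructor of a context contributes to its branch size exactly what the corresponding
argument of a `max` contributes to the weight, so `|𝔾| + ‖B‖ ≤ ‖𝔾⟨B⟩‖`, and `B = ⋆` gives the
upper bound. Conversely, descending at each `max` into an argument attaining it (the heavier side
of an arrow, a heaviest element of a sequence) builds a context whose branch size is the weight;
non-emptiness of the sequences makes such an element exist and the descent end at an occurrence
of `⋆`.
-/

theorem List.foldr_max_bot_mem {α : Type*} [LinearOrder α] [OrderBot α] {l : List α}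
    (hl : l ≠ []) : l.foldr max ⊥ ∈ l :=
  List.maximum_mem (List.foldr_max_of_ne_nil hl).symm

theorem TreeTy.weight_node (X : ℕ) (gs : List GenTy) :
    (TreeTy.node gs).weight X = X + (gs.map (GenTy.weight X)).foldr max 0 := by
  rw [TreeTy.weight, List.attach_map_val]

mutual
theorem LinCtx.bsize_add_weight_le_weight_plug (X : ℕ) (C : LinCtx) (B : LinTy) :
    C.bsize X + B.weight X ≤ (C.plug B).weight X := by
  cases C with
  | hole => simp [LinCtx.bsize, LinCtx.plug]
  | arrR _ C | arrL C _ =>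
    have := C.bsize_add_weight_le_weight_plug X B
    simp only [LinCtx.bsize, LinCtx.plug, LinTy.weight]
    omega

theorem TreeCtx.bsize_add_weight_le_weight_plug (X : ℕ) (C : TreeCtx) (B : LinTy) :
    C.bsize X + B.weight X ≤ (C.plug B).weight X := by
  cases C with
  | node l C r =>
    have hC := C.bsize_add_weight_le_weight_plug X B
    have hmax : (C.plug B).weight X ≤ ((l ++ C.plug B :: r).map (GenTy.weight X)).foldr max 0 :=
      List.le_max_of_le' 0 (List.mem_map_of_mem (by simp)) le_rfl
    rw [TreeCtx.bsize, TreeCtx.plug, TreeTy.weight_node]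
    omega

theorem GenCtx.bsize_add_weight_le_weight_plug (X : ℕ) (C : GenCtx) (B : LinTy) :
    C.bsize X + B.weight X ≤ (C.plug B).weight X := by
  cases C with
  | lin C | tree C =>
    rw [GenCtx.bsize, GenCtx.plug, GenTy.weight]
    exact C.bsize_add_weight_le_weight_plug X B
end

mutual
theorem LinTy.Good.exists_ctx_bsize_eq_weight (X : ℕ) :
    ∀ {A : LinTy}, A.Good → ∃ C : LinCtx, C.plug .star = A ∧ C.bsize X = A.weight X
  | _, .star => ⟨.hole, rfl, by rw [LinCtx.bsize, LinTy.weight]⟩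
  | .arr T A, .arr hT hA => by
    rcases le_or_gt (A.weight X + 1) (T.weight X) with h | h
    · obtain ⟨C, hplug, hbsize⟩ := hT.exists_ctx_bsize_eq_weight X
      exact ⟨.arrL C A, by rw [LinCtx.plug, hplug],
        by rw [LinCtx.bsize, hbsize, LinTy.weight, max_eq_left h]⟩
    · obtain ⟨C, hplug, hbsize⟩ := hA.exists_ctx_bsize_eq_weight X
      exact ⟨.arrR T C, by rw [LinCtx.plug, hplug],
        by rw [LinCtx.bsize, hbsize, LinTy.weight, max_eq_right h.le, add_comm]⟩

theorem TreeTy.Good.exists_ctx_bsize_eq_weight (X : ℕ) :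
    ∀ {T : TreeTy}, T.Good → ∃ C : TreeCtx, C.plug .star = T ∧ C.bsize X = T.weight X
  | .node gs, .node hne hgood => by
    obtain ⟨g, hg, hmax⟩ := List.mem_map.mp <|
      List.foldr_max_bot_mem (l := gs.map (GenTy.weight X)) (by simpa using hne)
    obtain ⟨C, hplug, hbsize⟩ := (hgood g hg).exists_ctx_bsize_eq_weight X
    obtain ⟨l, r, rfl⟩ := List.append_of_mem hg
    exact ⟨.node l C r, by rw [TreeCtx.plug, hplug],
      by rw [TreeCtx.bsize, TreeTy.weight_node, hbsize, hmax]; rfl⟩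

theorem GenTy.Good.exists_ctx_bsize_eq_weight (X : ℕ) :
    ∀ {G : GenTy}, G.Good → ∃ C : GenCtx, C.plug .star = G ∧ C.bsize X = G.weight X
  | .lin _, .lin hA => by
    obtain ⟨C, hplug, hbsize⟩ := hA.exists_ctx_bsize_eq_weight X
    exact ⟨.lin C, by rw [GenCtx.plug, hplug], by rw [GenCtx.bsize, GenTy.weight, hbsize]⟩
  | .tree _, .tree hT => by
    obtain ⟨C, hplug, hbsize⟩ := hT.exists_ctx_bsize_eq_weight X
    exact ⟨.tree C, by rw [GenCtx.plug, hplug], by rw [GenCtx.bsize, GenTy.weight, hbsize]⟩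
end

/-- the weight of a generic type `G` equals the maximum, over all type
contexts `𝔾` with `G = 𝔾⟨⋆⟩`, of the branch size of `𝔾`; the maximum is attained.
(`G.Good` says `G` contains at least one occurrence of `⋆` hereditarily: no empty
sequence occurs, and every linear leaf ends in `⋆`.) -/
theorem weight_eq_max_bsize (X : ℕ) (G : GenTy) (hG : G.Good) :
    (∀ C : GenCtx, C.plug LinTy.star = G → C.bsize X ≤ G.weight X) ∧
    (∃ C : GenCtx, C.plug LinTy.star = G ∧ C.bsize X = G.weight X) := by
  refine ⟨fun C hC => ?_, hG.exists_ctx_bsize_eq_weight X⟩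
  have := C.bsize_add_weight_le_weight_plug X .star
  rw [hC] at this
  omega
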